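/- Suppose g ≥ 3. The subspace of T-compatible vectors in the Q-vector space V (with basis {λ, δ_irr} ∪ {δ_{i,I} : [i,I] ∈ T*_{g,n} ∖ {[1,∅]}}), i.e. the common kernel of the elliptic bridge functionals c_t for all elliptic bridge types t contained in T, has codimension in V equal to the number of minimal subsets of T_{g,n} contained in T. -/

import Mathlib

/-!
The codimension of the common kernel of finitely many linear functionals equals their number
as soon as each of them is nonzero on some vector killed by all the others. For `c_irr` such a
vector is `12λ - δ_irr`. A pair functional `c_{[e,I],[e+1,I]}` can be written with `2e < g`;
then the alternating vector `Σ_{τ ≤ e} (-1)^(e-τ) δ_{[τ,I]}` telescopes to zero under every pair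
functional written likewise, except the ones equal to `c_{[e,I],[e+1,I]}`. Finally a bridge
functional determines its pair of classes (test it against the `δ_c`), so the functionals
attached to `T` are in bijection with the minimal subsets contained in `T`.
-/

open Finset

namespace CTV

/-- Pairs `(τ, I)` with `τ : ℕ` and `I ⊆ [n]`. -/
abbrev Pr (n : ℕ) := ℕ × Finset (Fin n)

/-- The involution `σ(τ,I) = (g - τ, [n] \ I)`. -/
def sigmaP (g : ℕ) {n : ℕ} (p : Pr n) : Pr n := (g - p.1, p.2ᶜ)

/-- The set `S = {(τ,I) : 0 ≤ τ ≤ g, I ⊆ [n]} \ {(0,∅),(g,[n])}`. -/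
def SSet (g n : ℕ) : Set (Pr n) :=
  {p | p.1 ≤ g ∧ p ≠ (0, (∅ : Finset (Fin n))) ∧ p ≠ (g, (Finset.univ : Finset (Fin n)))}

/-- `SSet g n` as a finite set. -/
def SFin (g n : ℕ) : Finset (Pr n) :=
  (Finset.range (g + 1) ×ˢ (Finset.univ : Finset (Finset (Fin n)))).filter
    fun p => p ≠ (0, (∅ : Finset (Fin n))) ∧ p ≠ (g, (Finset.univ : Finset (Fin n)))

/-- A class of `T*_{g,n}` is represented by the σ-orbit `{p, σ p}`. -/
abbrev ClassRep (n : ℕ) := Finset (Pr n)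

/-- The class `[τ, I]`, encoded as the orbit `{(τ,I), σ(τ,I)}`. -/
def cls (g : ℕ) {n : ℕ} (p : Pr n) : ClassRep n := {p, sigmaP g p}

/-- `(τ+1, I)`. -/
def succP {n : ℕ} (p : Pr n) : Pr n := (p.1 + 1, p.2)

/-- The class `[1, ∅]`. -/
def clsOne (g n : ℕ) : ClassRep n := cls g (1, (∅ : Finset (Fin n)))

/-- The set `T_{g,n} = {irr} ∪ T*_{g,n}`, with `irr = none`. -/
def TgnSet (g n : ℕ) : Set (Option (ClassRep n)) :=
  {x | x = none ∨ ∃ p ∈ SSet g n, x = some (cls g p)}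

/-- `(τ,I)` represents an adjacent pair of classes `{[τ,I],[τ+1,I]}`, both in `T*` and
neither equal to `[1,∅]`. -/
def ValidPair (g n : ℕ) (p : Pr n) : Prop :=
  p ∈ SSet g n ∧ succP p ∈ SSet g n ∧ cls g p ≠ clsOne g n ∧ cls g (succP p) ≠ clsOne g n

/-- Two classes are neighbors if they admit representatives in `S` of the form
`(τ,I)` and `(τ±1,I)`. -/
def Nbr (g n : ℕ) (c d : ClassRep n) : Prop :=
  ∃ p ∈ SSet g n, ∃ q ∈ SSet g n,
    cls g p = c ∧ cls g q = d ∧ (q.1 = p.1 + 1 ∨ p.1 = q.1 + 1) ∧ q.2 = p.2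

/-- `T ⊆ T_{g,n}` is admissible if `[1,∅] ∉ T`, `irr ∉ T` when `g = 1`, and every
class in `T` has a neighbor in `T`. -/
def Admissible (g n : ℕ) (T : Set (Option (ClassRep n))) : Prop :=
  some (clsOne g n) ∉ T ∧ (g = 1 → none ∉ T) ∧
    ∀ c : ClassRep n, some c ∈ T → ∃ d : ClassRep n, some d ∈ T ∧ Nbr g n c d

/-- `T̃ := T \ {[1,∅]}` if `g ≥ 2`, and `T \ {[1,∅], irr}` if `g ≤ 1`. -/
def Ttil (g n : ℕ) (T : Set (Option (ClassRep n))) : Set (Option (ClassRep n)) :=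
  if g ≤ 1 then T \ {some (clsOne g n), none} else T \ {some (clsOne g n)}

/-- `T^adm`: remove from `T̃` all classes with no neighbor in `T̃`. -/
def Tadm (g n : ℕ) (T : Set (Option (ClassRep n))) : Set (Option (ClassRep n)) :=
  {x | x ∈ Ttil g n T ∧ ∀ c : ClassRep n, x = some c →
    ∃ d : ClassRep n, some d ∈ Ttil g n T ∧ Nbr g n c d}

/-- Minimal subsets of `T_{g,n}`: `{irr}` when `g ≥ 2`, and adjacent pairs
`{[τ,I],[τ+1,I]}` avoiding `[1,∅]`. -/
def IsMinimal (g n : ℕ) (M : Set (Option (ClassRep n))) : Prop :=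
  (2 ≤ g ∧ M = {(none : Option (ClassRep n))}) ∨
    ∃ p : Pr n, ValidPair g n p ∧ M = {some (cls g p), some (cls g (succP p))}

/-- Basis index for the ℚ-vector space `V` with basis `{λ, δ_irr} ∪ {δ_{i,I}}`:
`Sum.inl () = λ`, `Sum.inr (Sum.inl ()) = δ_irr`, `Sum.inr (Sum.inr c) = δ_c`. -/
abbrev BIdx (n : ℕ) := Unit ⊕ Unit ⊕ ClassRep n

/-- The ℚ-vector space `V`. -/
abbrev Vsp (n : ℕ) := BIdx n → ℚ

def lamIdx (n : ℕ) : BIdx n := Sum.inl ()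
def irrIdx (n : ℕ) : BIdx n := Sum.inr (Sum.inl ())
def clsIdx {n : ℕ} (c : ClassRep n) : BIdx n := Sum.inr (Sum.inr c)

/-- Coordinate projection as a linear functional on `V`. -/
def pr {n : ℕ} (i : BIdx n) : Vsp n →ₗ[ℚ] ℚ := LinearMap.proj i

/-- The elliptic bridge functional `c_irr(L) = a + 10·b_irr`. -/
def cIrrF (n : ℕ) : Vsp n →ₗ[ℚ] ℚ := pr (lamIdx n) + (10 : ℚ) • pr (irrIdx n)

/-- The elliptic bridge functional
`c_{[τ,I],[τ+1,I]}(L) = a + 12·b_irr - b_{τ,I} - b_{τ+1,I}`. -/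
def cPairF (g n : ℕ) (p : Pr n) : Vsp n →ₗ[ℚ] ℚ :=
  pr (lamIdx n) + (12 : ℚ) • pr (irrIdx n)
    - pr (clsIdx (cls g p)) - pr (clsIdx (cls g (succP p)))
/-- The set of elliptic bridge functionals attached to the bridge types contained
in `T`. -/
def FT (g n : ℕ) (T : Set (Option (ClassRep n))) : Set (Vsp n →ₗ[ℚ] ℚ) :=
  {φ | ((2 ≤ g ∧ Option.none ∈ T) ∧ φ = cIrrF n) ∨
    ∃ p : Pr n, ValidPair g n p ∧ some (cls g p) ∈ T ∧
      some (cls g (succP p)) ∈ T ∧ φ = cPairF g n p}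

end CTV

theorem finrank_quotient_iInf_ker_eq_ncard {K V : Type*} [Field K] [AddCommGroup V] [Module K V]
    (s : Set (V →ₗ[K] K)) (hs : s.Finite)
    (hsep : ∀ φ ∈ s, ∃ v, φ v ≠ 0 ∧ ∀ ψ ∈ s, ψ v ≠ 0 → ψ = φ) :
    Module.finrank K (V ⧸ ⨅ φ ∈ s, LinearMap.ker φ) = s.ncard := by
  classical
  have := hs.fintype
  let L : V →ₗ[K] (s → K) := LinearMap.pi fun φ : s => (φ : V →ₗ[K] K)
  have hker : LinearMap.ker L = ⨅ φ ∈ s, LinearMap.ker φ := by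
    rw [LinearMap.ker_pi, iInf_subtype]
  have hsingle : ∀ φ : s, Pi.single φ 1 ∈ LinearMap.range L := by
    rintro ⟨φ, hφ⟩
    obtain ⟨v, hv, hψ⟩ := hsep φ hφ
    refine ⟨(φ v)⁻¹ • v, funext fun ψ => ?_⟩
    by_cases h : ψ = ⟨φ, hφ⟩
    · subst h; simp [L, hv]
    · have : ψ.1 v = 0 := by
        by_contra h'
        exact h (Subtype.ext (hψ ψ.1 ψ.2 h'))
      simp [L, this, h]
  have hsurj : LinearMap.range L = ⊤ := by
    rw [eq_top_iff, ← (Pi.basisFun K s).span_eq, Submodule.span_le]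
    rintro _ ⟨φ, rfl⟩
    simpa using hsingle φ
  rw [← hker, (L.quotKerEquivRange.trans (LinearEquiv.ofTop _ hsurj)).finrank_eq,
    Module.finrank_fintype_fun_eq_card, Set.ncard_eq_toFinset_card', Set.toFinset_card]

theorem Set.ncard_image_eq_ncard_image_of_eq_iff {ι α β : Type*} {s : Set ι} {f : ι → α}
    {g : ι → β} (hfg : ∀ i j, f i = f j ↔ g i = g j) : (f '' s).ncard = (g '' s).ncard := by
  rcases s.eq_empty_or_nonempty with rfl | ⟨i₀, -⟩
  · simp
  have : Nonempty ι := ⟨i₀⟩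
  let h : α → β := fun a => g (Function.invFunOn f s a)
  have hh : ∀ i ∈ s, h (f i) = g i := fun i hi =>
    (hfg _ _).1 (Function.invFunOn_eq ⟨i, hi, rfl⟩)
  have himage : h '' (f '' s) = g '' s := by
    rw [Set.image_image]; exact Set.image_congr hh
  rw [← himage, Set.InjOn.ncard_image (f := h)]
  rintro _ ⟨i, hi, rfl⟩ _ ⟨j, hj, rfl⟩ hij
  rw [hh i hi, hh j hj] at hij
  exact (hfg i j).2 hij

namespace CTV

lemma cls_sigmaP (g : ℕ) {n : ℕ} {p : Pr n} (hp : p.1 ≤ g) : cls g (sigmaP g p) = cls g p := by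
  obtain ⟨τ, I⟩ := p
  rw [cls, cls, sigmaP, sigmaP, Nat.sub_sub_self hp, compl_compl, Finset.pair_comm]

lemma succP_sigmaP_succP (g : ℕ) {n : ℕ} {p : Pr n} (hp : p.1 + 1 ≤ g) :
    succP (sigmaP g (succP p)) = sigmaP g p := by
  simp only [succP, sigmaP, Prod.mk.injEq, and_true]
  omega

def mkVec {n : ℕ} (a b : ℚ) (w : ClassRep n → ℚ) : Vsp n :=
  Sum.elim (fun _ => a) (Sum.elim (fun _ => b) w)

@[simp]
lemma cIrrF_mkVec {n : ℕ} (a b : ℚ) (w : ClassRep n → ℚ) : cIrrF n (mkVec a b w) = a + 10 * b := by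
  simp [cIrrF, pr, mkVec, lamIdx, irrIdx]

@[simp]
lemma cPairF_mkVec (g : ℕ) {n : ℕ} (p : Pr n) (a b : ℚ) (w : ClassRep n → ℚ) :
    cPairF g n p (mkVec a b w) = a + 12 * b - w (cls g p) - w (cls g (succP p)) := by
  simp [cPairF, pr, mkVec, lamIdx, irrIdx, clsIdx]

lemma cPairF_ne_cIrrF (g : ℕ) {n : ℕ} (p : Pr n) : cPairF g n p ≠ cIrrF n := by
  intro h
  have := LinearMap.congr_fun h (mkVec 0 1 0)
  norm_num at this

lemma cPairF_mkVec_single_eq_zero_iff (g : ℕ) {n : ℕ} (p : Pr n) (c : ClassRep n) :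
    cPairF g n p (mkVec 0 0 (Pi.single c 1)) = 0 ↔ c ∉ ({cls g p, cls g (succP p)} : Set _) := by
  simp only [cPairF_mkVec, Pi.single_apply]
  split_ifs <;> norm_num <;> simp_all [eq_comm]

lemma cPairF_eq_cPairF_iff (g : ℕ) {n : ℕ} (p q : Pr n) :
    cPairF g n p = cPairF g n q ↔
      ({cls g p, cls g (succP p)} : Set (ClassRep n)) = {cls g q, cls g (succP q)} := by
  refine ⟨fun h => Set.ext fun c => ?_, fun h => ?_⟩
  · rw [← not_iff_not, ← cPairF_mkVec_single_eq_zero_iff, ← cPairF_mkVec_single_eq_zero_iff,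
      LinearMap.congr_fun h]
  · rcases Set.pair_eq_pair_iff.1 h with ⟨h₁, h₂⟩ | ⟨h₁, h₂⟩
    · rw [cPairF, h₁, h₂]; rfl
    · rw [cPairF, h₁, h₂, sub_right_comm]; rfl

lemma cPairF_sigmaP_succP (g : ℕ) {n : ℕ} {p : Pr n} (hp : p.1 + 1 ≤ g) :
    cPairF g n (sigmaP g (succP p)) = cPairF g n p := by
  rw [cPairF_eq_cPairF_iff, succP_sigmaP_succP g hp, cls_sigmaP g hp, cls_sigmaP g (by omega),
    Set.pair_comm]

def altSign (e τ : ℕ) : ℚ := if τ ≤ e then (-1) ^ (e - τ) else 0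

lemma altSign_add_altSign_succ (e a : ℕ) :
    altSign e a + altSign e (a + 1) = if a = e then 1 else 0 := by
  unfold altSign
  rcases lt_trichotomy a e with h | rfl | h
  · rw [if_pos h.le, if_pos (Nat.succ_le_of_lt h), if_neg h.ne,
      show e - a = e - (a + 1) + 1 by omega, pow_succ]
    ring
  · simp
  · rw [if_neg (by omega), if_neg (by omega), if_neg h.ne']
    ring

lemma altSign_of_lt {e τ : ℕ} (h : e < τ) : altSign e τ = 0 := if_neg h.not_ge

lemma altSign_sub_succ {g e a : ℕ} (he : 2 * e < g) (ha : 2 * a < g) :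
    altSign e (g - (a + 1)) = if a = e ∧ g = 2 * e + 1 then 1 else 0 := by
  unfold altSign
  split_ifs
  · rw [show e - (g - (a + 1)) = 0 by omega, pow_zero]
  · omega
  · omega
  · rfl

lemma sum_cls_eq_add {g n : ℕ} (h : Pr n → ℚ) (p : Pr n) (hfix : sigmaP g p = p → h p = 0) :
    ∑ x ∈ cls g p, h x = h p + h (sigmaP g p) := by
  by_cases hp : sigmaP g p = p
  · simp [cls, hp, hfix hp]
  · rw [cls, Finset.sum_pair (Ne.symm hp)]

/-- For `2e < g` this is `Σ_{τ ≤ e} (-1)^(e-τ) δ_{[τ,I]}`, read off a class by summing over its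
representatives. -/
def chainWeight {n : ℕ} (e : ℕ) (I : Finset (Fin n)) (c : ClassRep n) : ℚ :=
  ∑ x ∈ c, if x.2 = I then altSign e x.1 else 0

lemma chainWeight_cls {g n e : ℕ} (I : Finset (Fin n)) (he : 2 * e < g) (τ : ℕ)
    (J : Finset (Fin n)) :
    chainWeight e I (cls g (τ, J)) =
      (if J = I then altSign e τ else 0) + if Jᶜ = I then altSign e (g - τ) else 0 := by
  refine sum_cls_eq_add _ _ fun hfix => ?_
  simp only [sigmaP, Prod.mk.injEq] at hfix
  rw [altSign_of_lt (by omega), ite_self]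

lemma cPairF_chainWeight {g n e : ℕ} (I : Finset (Fin n)) (he : 2 * e < g) {a : ℕ}
    (ha : 2 * a < g) (J : Finset (Fin n)) :
    cPairF g n (a, J) (mkVec 0 0 (chainWeight e I)) =
      -((if J = I ∧ a = e then 1 else 0) + if Jᶜ = I ∧ a = e ∧ g = 2 * e + 1 then 1 else 0) := by
  rw [cPairF_mkVec, succP, chainWeight_cls I he, chainWeight_cls I he,
    altSign_of_lt (e := e) (τ := g - a) (by omega), altSign_sub_succ he ha]
  have := altSign_add_altSign_succ e a
  split_ifs at this ⊢ <;> simp_all <;> linarith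

lemma exists_separating_cPairF_of_two_mul_lt {g n e : ℕ} (I : Finset (Fin n)) (he : 2 * e < g) :
    ∃ v, cPairF g n (e, I) v ≠ 0 ∧ cIrrF n v = 0 ∧
      ∀ q : Pr n, 2 * q.1 < g → cPairF g n q v ≠ 0 → cPairF g n q = cPairF g n (e, I) := by
  refine ⟨mkVec 0 0 (chainWeight e I), ?_, by simp, ?_⟩
  · rw [cPairF_chainWeight I he he, if_pos ⟨rfl, rfl⟩]
    split_ifs <;> norm_num
  · rintro ⟨a, J⟩ ha hne
    rw [cPairF_chainWeight I he ha] at hne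
    by_cases hJ : J = I ∧ a = e
    · rw [hJ.1, hJ.2]
    -- for `g = 2e + 1`, `(e, Iᶜ)` names the classes of `(e, I)` in swapped order
    · obtain ⟨rfl, rfl, hg⟩ : Jᶜ = I ∧ a = e ∧ g = 2 * e + 1 := by
        by_contra h
        rw [if_neg hJ, if_neg h] at hne
        norm_num at hne
      convert cPairF_sigmaP_succP g (p := (a, Jᶜ)) (by simp only; omega) using 2
      simp only [sigmaP, succP, compl_compl, Prod.mk.injEq, and_true]
      omega

lemma exists_two_mul_lt_cPairF_eq {g n : ℕ} (q : Pr n) (hq : q.1 + 1 ≤ g) :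
    ∃ q' : Pr n, 2 * q'.1 < g ∧ cPairF g n q' = cPairF g n q := by
  by_cases hlow : 2 * q.1 < g
  · exact ⟨q, hlow, rfl⟩
  · exact ⟨sigmaP g (succP q), by simp only [sigmaP, succP]; omega, cPairF_sigmaP_succP g hq⟩

lemma exists_separating_cPairF {g n : ℕ} (p : Pr n) (hp : p.1 + 1 ≤ g) :
    ∃ v, cPairF g n p v ≠ 0 ∧ cIrrF n v = 0 ∧
      ∀ q : Pr n, q.1 + 1 ≤ g → cPairF g n q v ≠ 0 → cPairF g n q = cPairF g n p := by
  obtain ⟨⟨e, I⟩, he, hpe⟩ := exists_two_mul_lt_cPairF_eq p hp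
  obtain ⟨v, hv, hirr, hsep⟩ := exists_separating_cPairF_of_two_mul_lt I he
  refine ⟨v, hpe ▸ hv, hirr, fun q hq hqv => ?_⟩
  obtain ⟨q', hq', hqq'⟩ := exists_two_mul_lt_cPairF_eq q hq
  rw [← hqq', ← hpe]
  exact hsep q' hq' (hqq' ▸ hqv)

lemma exists_separating_cIrrF (g n : ℕ) :
    ∃ v, cIrrF n v ≠ 0 ∧ ∀ q : Pr n, cPairF g n q v = 0 :=
  ⟨mkVec 12 (-1) 0, by norm_num, fun q => by norm_num⟩

/-- Elliptic bridge types: `none` is `irr`, `some p` is the pair `{[p], [p + 1]}`. -/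
def IsBridgeIndex (g n : ℕ) : Option (Pr n) → Prop
  | none => 2 ≤ g
  | some p => ValidPair g n p

def bridgeType (g n : ℕ) : Option (Pr n) → Set (Option (ClassRep n))
  | none => {none}
  | some p => {some (cls g p), some (cls g (succP p))}

def bridgeFunctional (g n : ℕ) : Option (Pr n) → (Vsp n →ₗ[ℚ] ℚ)
  | none => cIrrF n
  | some p => cPairF g n p

lemma setOf_isMinimal_subset_eq_image (g n : ℕ) (T : Set (Option (ClassRep n))) :
    {M | IsMinimal g n M ∧ M ⊆ T} =
      bridgeType g n '' {i | IsBridgeIndex g n i ∧ bridgeType g n i ⊆ T} := by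
  ext M
  simp only [IsMinimal, Set.mem_ofPred_eq, Set.mem_image, Option.exists, IsBridgeIndex,
    bridgeType]
  aesop

lemma FT_eq_image (g n : ℕ) (T : Set (Option (ClassRep n))) :
    FT g n T = bridgeFunctional g n '' {i | IsBridgeIndex g n i ∧ bridgeType g n i ⊆ T} := by
  ext φ
  simp only [FT, Set.mem_ofPred_eq, Set.mem_image, Option.exists, IsBridgeIndex, bridgeType,
    bridgeFunctional, Set.singleton_subset_iff, Set.insert_subset_iff]
  aesop

lemma finite_setOf_isBridgeIndex (g n : ℕ) : {i | IsBridgeIndex g n i}.Finite := by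
  refine ((((Set.finite_Iic g).prod (Set.finite_univ (α := Finset (Fin n)))).image some).insert
    none).subset ?_
  rintro (_ | p) hp
  · exact Set.mem_insert _ _
  · exact Set.mem_insert_of_mem _ ⟨p, ⟨hp.1.1, trivial⟩, rfl⟩

lemma bridgeFunctional_eq_iff (g n : ℕ) (i j : Option (Pr n)) :
    bridgeFunctional g n i = bridgeFunctional g n j ↔ bridgeType g n i = bridgeType g n j := by
  have irr_ne_pair (p : Pr n) : ({none} : Set (Option (ClassRep n))) ≠ bridgeType g n (some p) :=
    fun h => by simpa [bridgeType] using h.subset (Set.mem_singleton none)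
  rcases i with _ | p <;> rcases j with _ | q
  · exact iff_of_true rfl rfl
  · exact iff_of_false (cPairF_ne_cIrrF g q).symm (irr_ne_pair q)
  · exact iff_of_false (cPairF_ne_cIrrF g p) (irr_ne_pair p).symm
  · simp only [bridgeFunctional, bridgeType, cPairF_eq_cPairF_iff, Set.pair_eq_pair_iff,
      Option.some_inj]

lemma exists_separating_bridgeFunctional {g n : ℕ} {i : Option (Pr n)}
    (hi : IsBridgeIndex g n i) :
    ∃ v, bridgeFunctional g n i v ≠ 0 ∧ ∀ j, IsBridgeIndex g n j →
      bridgeFunctional g n j v ≠ 0 → bridgeFunctional g n j = bridgeFunctional g n i := by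
  rcases i with _ | p
  · obtain ⟨v, hv, hpair⟩ := exists_separating_cIrrF g n
    refine ⟨v, hv, fun j _ hj => ?_⟩
    rcases j with _ | q
    · rfl
    · exact absurd (hpair q) hj
  · obtain ⟨v, hv, hirr, hpair⟩ := exists_separating_cPairF p hi.2.1.1
    refine ⟨v, hv, fun j hj hjv => ?_⟩
    rcases j with _ | q
    · exact absurd hirr hjv
    · exact hpair q hj.2.1.1 hjv

theorem stmt14_general (g n : ℕ) (T : Set (Option (ClassRep n))) :
    Module.finrank ℚ (Vsp n ⧸ (⨅ φ ∈ FT g n T, LinearMap.ker φ)) =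
      Set.ncard {M : Set (Option (ClassRep n)) | IsMinimal g n M ∧ M ⊆ T} := by
  have hfin : {i | IsBridgeIndex g n i ∧ bridgeType g n i ⊆ T}.Finite :=
    (finite_setOf_isBridgeIndex g n).subset fun _ hi => hi.1
  rw [FT_eq_image, setOf_isMinimal_subset_eq_image,
    finrank_quotient_iInf_ker_eq_ncard _ (hfin.image _)]
  · exact Set.ncard_image_eq_ncard_image_of_eq_iff (bridgeFunctional_eq_iff g n)
  · rintro _ ⟨i, hi, rfl⟩
    obtain ⟨v, hv, hsep⟩ := exists_separating_bridgeFunctional hi.1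
    exact ⟨v, hv, fun _ ⟨j, hj, hjφ⟩ hjv => hjφ ▸ hsep j hj.1 (hjφ ▸ hjv)⟩

/-- For `g ≥ 3` and `T ⊆ T_{g,n}`, the subspace of `T`-compatible
vectors of `V` — the common kernel of the elliptic bridge functionals `c_t` for all
bridge types `t` contained in `T` — has codimension in `V` equal to the number of
minimal subsets of `T_{g,n}` contained in `T`. -/
theorem stmt14 (g n : ℕ) (hg : 3 ≤ g) (T : Set (Option (ClassRep n)))
    (hT : T ⊆ TgnSet g n) :
    Module.finrank ℚ (Vsp n ⧸ (⨅ φ ∈ FT g n T, LinearMap.ker φ)) =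
      Set.ncard {M : Set (Option (ClassRep n)) | IsMinimal g n M ∧ M ⊆ T} :=
  stmt14_general g n T

end CTV
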